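/- Let t, t' be binary trees with the same number of leaves, σ a bijection from the leaves of t to the leaves of t', and τ, τ' states of t, t' respectively such that W(t', τ')_{σ(ℓ)} = W(t, τ)_ℓ for every leaf ℓ of t. Then τ is constant on the equivalence classes of the relation ∼: if ν ∼ ν̃ for internal vertices ν, ν̃ of t, then τ(ν) = τ(ν̃). -/

import Mathlib

/-- Finite ordered rooted binary trees. -/
inductive BTree where
  | leaf : BTree
  | node : BTree → BTree → BTree
deriving DecidableEq

/-- Positions (vertices) in a binary tree: `false` = go to the left child,
`true` = go to the right child. -/
abbrev Pos := List Bool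

/-- The subtree of `t` at position `p`, if `p` stays inside `t`. -/
def BTree.subtreeAt : BTree → Pos → Option BTree
  | t, [] => some t
  | .leaf, _ :: _ => none
  | .node l r, b :: p => (if b then r else l).subtreeAt p

/-- `p` is an internal (trivalent) vertex of `t`. -/
def IsInternal (t : BTree) (p : Pos) : Prop :=
  ∃ l r, t.subtreeAt p = some (BTree.node l r)

/-- `p` is a leaf of `t`. -/
def IsLeafPos (t : BTree) (p : Pos) : Prop :=
  t.subtreeAt p = some BTree.leaf

/-- The number of leaves of a binary tree. -/
def BTree.leaves : BTree → ℕ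
  | .leaf => 1
  | .node l r => l.leaves + r.leaves

/-- The word `W(t,τ)_ℓ` in the free monoid on the letters `a_j = (j, false)`,
`b_j = (j, true)`, read along the root-to-leaf path `p`; the state `τ` is given as a
total function on positions (only its values at internal vertices on the path matter). -/
def Wword (τ : Pos → Fin 2) (p : Pos) : List (ℕ × Bool) :=
  (List.range p.length).filterMap fun i =>
    let s : ℕ := ((List.range (i + 1)).map fun r => ((τ (p.take r) : ℕ))).sum
    if s = 0 then none else some (s - 1, p.getD i false)

/-- Given trees `t, t'` and a bijection `σ` between their leaves, two internal vertices
`ν, μ` of `t` are equivalent if there are an internal vertex `ν'` of `t'` and leaves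
`ℓ, ℓ'` of `t` descending from `ν, μ` respectively such that `σ ℓ` and `σ ℓ'` descend
from `ν'`, the distance from `ν` to `ℓ` equals the distance from `ν'` to `σ ℓ`, and the
distance from `μ` to `ℓ'` equals the distance from `ν'` to `σ ℓ'` (a leaf descends
from a vertex iff the vertex's position is a prefix of the leaf's position, and the
distance is the difference of the lengths of the positions). -/
def VertEquiv (t t' : BTree)
    (σ : {p : Pos // IsLeafPos t p} ≃ {p : Pos // IsLeafPos t' p})
    (ν μ : Pos) : Prop :=
  ∃ ν' : Pos, IsInternal t' ν' ∧
    ∃ (ℓ ℓ' : {p : Pos // IsLeafPos t p}),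
      ν <+: ℓ.1 ∧ μ <+: ℓ'.1 ∧ ν' <+: (σ ℓ).1 ∧ ν' <+: (σ ℓ').1 ∧
      ℓ.1.length - ν.length = (σ ℓ).1.length - ν'.length ∧
      ℓ'.1.length - μ.length = (σ ℓ').1.length - ν'.length

namespace Stmt12Aux

def Ssum (τ : Pos → Fin 2) (p : Pos) (i : ℕ) : ℕ :=
  ((List.range (i + 1)).map fun r => ((τ (p.take r) : ℕ))).sum

def Sval (w : List (ℕ × Bool)) (d : ℕ) : ℕ :=
  if 1 ≤ d ∧ d ≤ w.length then (w.getD (w.length - d) (0, false)).1 + 1 else 0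

lemma Wword_eq (τ : Pos → Fin 2) (p : Pos) :
    Wword τ p = (List.range p.length).filterMap fun i =>
      if Ssum τ p i = 0 then none else some (Ssum τ p i - 1, p.getD i false) := rfl

lemma Ssum_succ (τ : Pos → Fin 2) (p : Pos) (i : ℕ) :
    Ssum τ p (i + 1) = Ssum τ p i + τ (p.take (i + 1)) := by
  simp [Ssum, List.range_succ, Nat.add_assoc]

lemma Ssum_mono (τ : Pos → Fin 2) (p : Pos) : Monotone (Ssum τ p) := by
  apply monotone_nat_of_le_succ
  intro i
  rw [Ssum_succ]
  omega

lemma Ssum_append (τ : Pos → Fin 2) (p : Pos) (b : Bool) {i : ℕ} (hi : i ≤ p.length) :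
    Ssum τ (p ++ [b]) i = Ssum τ p i := by
  unfold Ssum
  congr 1
  apply List.map_congr_left
  intro r hr
  rw [List.mem_range] at hr
  rw [List.take_append_of_le_length (by omega)]

lemma length_Wword_le (τ : Pos → Fin 2) (p : Pos) : (Wword τ p).length ≤ p.length := by
  rw [Wword_eq]
  calc _ ≤ (List.range p.length).length := List.length_filterMap_le _ _
  _ = p.length := List.length_range

lemma Wword_nil (τ : Pos → Fin 2) (p : Pos) (h : Ssum τ p p.length = 0) :
    Wword τ p = [] := by
  rw [Wword_eq, List.filterMap_eq_nil_iff]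
  intro i hi
  rw [List.mem_range] at hi
  have : Ssum τ p i ≤ Ssum τ p p.length := Ssum_mono τ p (by omega)
  rw [if_pos (by omega)]

lemma Wword_append (τ : Pos → Fin 2) (p : Pos) (b : Bool) :
    Wword τ (p ++ [b]) = Wword τ p ++
      (if Ssum τ p p.length = 0 then [] else [(Ssum τ p p.length - 1, b)]) := by
  rw [Wword_eq, Wword_eq]
  have hl : (p ++ [b]).length = p.length + 1 := by simp
  rw [hl, List.range_succ, List.filterMap_append]
  congr 1
  · apply List.filterMap_congr
    intro i hi
    rw [List.mem_range] at hi
    rw [Ssum_append τ p b (le_of_lt hi), List.getD_append _ _ _ _ hi]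
  · have hs := Ssum_append τ p b (le_refl p.length)
    have hg : (p ++ [b]).getD p.length false = b := by
      simp [List.getD_eq_getElem?_getD]
    by_cases hc : Ssum τ p p.length = 0
    · simp [hs, hc]
    · simp [hs, hc, hg]


lemma Sval_Wword (τ : Pos → Fin 2) : ∀ (p : Pos) (d : ℕ), 1 ≤ d → d ≤ p.length →
    Sval (Wword τ p) d = Ssum τ p (p.length - d) := by
  intro p
  induction p using List.reverseRecOn with
  | nil => intro d h1 h2; simp at h2; omega
  | append_singleton p b IH =>
    intro d h1 h2
    have hlp : (p ++ [b]).length = p.length + 1 := by simp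
    rw [Wword_append]
    by_cases hc : Ssum τ p p.length = 0
    · rw [if_pos hc, List.append_nil, Wword_nil τ p hc]
      have h3 : (p ++ [b]).length - d ≤ p.length := by omega
      rw [Ssum_append τ p b h3]
      have h4 : Ssum τ p ((p ++ [b]).length - d) ≤ Ssum τ p p.length :=
        Ssum_mono τ p h3
      have h5 : Sval [] d = 0 := by
        rw [Sval, if_neg]; simp; omega
      omega
    · rw [if_neg hc]
      set w := Wword τ p with hw
      set x : ℕ × Bool := (Ssum τ p p.length - 1, b) with hx
      have hLw : (w ++ [x]).length = w.length + 1 := by simp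
      rcases Nat.lt_or_ge d 2 with hd | hd
      · have hd1 : d = 1 := by omega
        subst hd1
        rw [Sval, if_pos (by omega)]
        have hidx : (w ++ [x]).length - 1 = w.length := by omega
        rw [hidx]
        have hg : (w ++ [x]).getD w.length (0, false) = x := by
          simp [List.getD_eq_getElem?_getD]
        rw [hg]
        have h6 : (p ++ [b]).length - 1 = p.length := by omega
        rw [h6, Ssum_append τ p b le_rfl, hx]
        simp
        omega
      · obtain ⟨d', rfl⟩ : ∃ d', d = d' + 1 := ⟨d - 1, by omega⟩
        have hd'1 : 1 ≤ d' := by omega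
        have hd'2 : d' ≤ p.length := by omega
        have h7 : (p ++ [b]).length - (d' + 1) = p.length - d' := by omega
        rw [h7, Ssum_append τ p b (by omega), ← IH d' hd'1 hd'2]
        by_cases hdw : d' ≤ w.length
        · rw [Sval, Sval, if_pos (by omega), if_pos (by constructor <;> omega)]
          have hidx : (w ++ [x]).length - (d' + 1) = w.length - d' := by omega
          rw [hidx]
          congr 1
          rw [List.getD_append _ _ _ _ (by omega)]
        · rw [Sval, Sval, if_neg (by omega), if_neg (by omega)]

lemma tau_eq (τ : Pos → Fin 2) (p : Pos) (m : ℕ) (hm : m < p.length) :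
    (τ (p.take m) : ℕ) =
      Sval (Wword τ p) (p.length - m) - Sval (Wword τ p) (p.length - m + 1) := by
  have hL := length_Wword_le τ p
  cases m with
  | zero =>
    have h2 : Sval (Wword τ p) (p.length + 1) = 0 := by
      rw [Sval, if_neg]; omega
    have h1 : Sval (Wword τ p) p.length = Ssum τ p 0 := by
      rw [Sval_Wword τ p p.length (by omega) le_rfl]; congr 1; omega
    simp only [Nat.sub_zero, h1, h2]
    simp [Ssum, List.range_succ]
  | succ k =>
    rw [Sval_Wword τ p _ (by omega) (by omega),
        show p.length - (k + 1) + 1 = p.length - k by omega,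
        Sval_Wword τ p _ (by omega) (by omega),
        show p.length - (p.length - (k + 1)) = k + 1 by omega,
        show p.length - (p.length - k) = k by omega,
        Ssum_succ]
    omega

end Stmt12Aux

/-- Let `t, t'` be binary trees with the same number of leaves, `σ` a
bijection from the leaves of `t` to the leaves of `t'`, and `τ, τ'` states of `t, t'`
respectively such that `W(t',τ')_{σ ℓ} = W(t,τ)_ℓ` for every leaf `ℓ` of `t`. Then `τ`
is constant on the equivalence classes of `∼`: if `ν ∼ μ` for internal vertices
`ν, μ` of `t`, then `τ ν = τ μ`. -/
theorem stmt12 (t t' : BTree) (hn : t.leaves = t'.leaves)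
    (σ : {p : Pos // IsLeafPos t p} ≃ {p : Pos // IsLeafPos t' p})
    (τ τ' : Pos → Fin 2)
    (hW : ∀ ℓ : {p : Pos // IsLeafPos t p}, Wword τ' (σ ℓ).1 = Wword τ ℓ.1)
    (ν μ : Pos) (hν : IsInternal t ν) (hμ : IsInternal t μ)
    (hsim : VertEquiv t t' σ ν μ) :
    τ ν = τ μ := by
  classical
  obtain ⟨ν', hν', ℓ, ℓ', hp1, hp2, hq1, hq2, hd1, hd2⟩ := hsim
  have key : ∀ (x : Pos), IsInternal t x → ∀ (ℓ₀ : {p : Pos // IsLeafPos t p}),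
      x <+: ℓ₀.1 →
      ℓ₀.1.length - x.length = (σ ℓ₀).1.length - ν'.length →
      ν' <+: (σ ℓ₀).1 →
      (τ x : ℕ) = (τ' ν' : ℕ) := by
    intro x hxint ℓ₀ hpre hd hq
    have hne : x ≠ ℓ₀.1 := by
      intro h
      obtain ⟨l, r, hlr⟩ := hxint
      have := ℓ₀.2
      rw [IsLeafPos, ← h, hlr] at this
      simp at this
    have hlt : x.length < ℓ₀.1.length := by
      rcases Nat.lt_or_ge x.length ℓ₀.1.length with h | h
      · exact h
      · exact absurd (List.IsPrefix.eq_of_length hpre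
          (le_antisymm hpre.length_le h)) hne
    have hlt' : ν'.length < (σ ℓ₀).1.length := by
      have := hq.length_le
      omega
    have e1 : (τ x : ℕ) = Stmt12Aux.Sval (Wword τ ℓ₀.1) (ℓ₀.1.length - x.length)
        - Stmt12Aux.Sval (Wword τ ℓ₀.1) (ℓ₀.1.length - x.length + 1) := by
      conv_lhs => rw [show x = ℓ₀.1.take x.length from
        (List.prefix_iff_eq_take.mp hpre)]
      exact Stmt12Aux.tau_eq τ ℓ₀.1 x.length hlt
    have e2 : (τ' ν' : ℕ) =
        Stmt12Aux.Sval (Wword τ' (σ ℓ₀).1) ((σ ℓ₀).1.length - ν'.length)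
        - Stmt12Aux.Sval (Wword τ' (σ ℓ₀).1) ((σ ℓ₀).1.length - ν'.length + 1) := by
      conv_lhs => rw [show ν' = (σ ℓ₀).1.take ν'.length from
        (List.prefix_iff_eq_take.mp hq)]
      exact Stmt12Aux.tau_eq τ' (σ ℓ₀).1 ν'.length hlt'
    rw [hW ℓ₀] at e2
    rw [e1, e2, hd]
  have h1 := key ν hν ℓ hp1 hd1 hq1
  have h2 := key μ hμ ℓ' hp2 hd2 hq2
  exact Fin.val_injective (h1.trans h2.symm)
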